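/- Let T be the three-legs spider tree with 7 vertices: a center v_1 of degree 3, three middle vertices v_2, v_3, v_4 each adjacent to v_1, and three leaves v_5, v_6, v_7 with v_{i+3} adjacent to v_{i+1} for i = 1,2,3. Then C_T − 1 is the largest real root of x³ + x² − 5x − 3; in particular 3 < C_T < 3.1. -/
import Mathlib


/-- The three-legs spider tree `T`: center `0` adjacent to `1, 2, 3`, and leaves
`4, 5, 6` adjacent to `1, 2, 3` respectively. -/
def threeLegsTree : SimpleGraph (Fin 7) :=
  SimpleGraph.fromRel (fun a b =>
    (a = 0 ∧ b = 1) ∨ (a = 0 ∧ b = 2) ∨ (a = 0 ∧ b = 3) ∨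
    (a = 1 ∧ b = 4) ∨ (a = 2 ∧ b = 5) ∨ (a = 3 ∧ b = 6))

/-- Closed ball of real radius `r` around `v` in the path metric of `threeLegsTree`. -/
noncomputable def tBall (v : Fin 7) (r : ℝ) : Finset (Fin 7) :=
  Finset.univ.filter (fun w => (threeLegsTree.dist v w : ℝ) ≤ r)

/-- The least doubling constant `C_T` of the three-legs tree. -/
noncomputable def CT : ℝ :=
  ⨅ μ : {f : Fin 7 → ℝ // ∀ v, 0 < f v},
    ⨆ v, ⨆ r : {r : ℝ // 0 ≤ r},
      (∑ w ∈ tBall v (2 * (r : ℝ)), μ.1 w) / (∑ w ∈ tBall v (r : ℝ), μ.1 w)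

namespace Spider
open SimpleGraph

/-! ### The distance matrix -/

def dmat : Fin 7 → Fin 7 → ℕ :=
  ![![0,1,1,1,2,2,2],
    ![1,0,2,2,1,3,3],
    ![1,2,0,2,3,1,3],
    ![1,2,2,0,3,3,1],
    ![2,1,3,3,0,4,4],
    ![2,3,1,3,4,0,4],
    ![2,3,3,1,4,4,0]]

lemma adj_of (a b : Fin 7)
    (h : (a = 0 ∧ b = 1) ∨ (a = 0 ∧ b = 2) ∨ (a = 0 ∧ b = 3) ∨
      (a = 1 ∧ b = 4) ∨ (a = 2 ∧ b = 5) ∨ (a = 3 ∧ b = 6)) (hne : a ≠ b) :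
    threeLegsTree.Adj a b := by
  unfold threeLegsTree
  rw [SimpleGraph.fromRel_adj]
  exact ⟨hne, Or.inl h⟩

lemma a01 : threeLegsTree.Adj 0 1 := adj_of _ _ (by tauto) (by decide)
lemma a02 : threeLegsTree.Adj 0 2 := adj_of _ _ (by tauto) (by decide)
lemma a03 : threeLegsTree.Adj 0 3 := adj_of _ _ (by tauto) (by decide)
lemma a14 : threeLegsTree.Adj 1 4 := adj_of _ _ (by tauto) (by decide)
lemma a25 : threeLegsTree.Adj 2 5 := adj_of _ _ (by tauto) (by decide)
lemma a36 : threeLegsTree.Adj 3 6 := adj_of _ _ (by tauto) (by decide)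

lemma dist_le_dmat : ∀ u v : Fin 7, threeLegsTree.dist u v ≤ dmat u v := by
  intro u v
  fin_cases u <;> fin_cases v
  · exact le_trans (SimpleGraph.dist_le .nil) (by decide)
  · exact le_trans (SimpleGraph.dist_le (.cons a01 .nil)) (by decide)
  · exact le_trans (SimpleGraph.dist_le (.cons a02 .nil)) (by decide)
  · exact le_trans (SimpleGraph.dist_le (.cons a03 .nil)) (by decide)
  · exact le_trans (SimpleGraph.dist_le (.cons a01 (.cons a14 .nil))) (by decide)
  · exact le_trans (SimpleGraph.dist_le (.cons a02 (.cons a25 .nil))) (by decide)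
  · exact le_trans (SimpleGraph.dist_le (.cons a03 (.cons a36 .nil))) (by decide)
  · exact le_trans (SimpleGraph.dist_le (.cons a01.symm .nil)) (by decide)
  · exact le_trans (SimpleGraph.dist_le .nil) (by decide)
  · exact le_trans (SimpleGraph.dist_le (.cons a01.symm (.cons a02 .nil))) (by decide)
  · exact le_trans (SimpleGraph.dist_le (.cons a01.symm (.cons a03 .nil))) (by decide)
  · exact le_trans (SimpleGraph.dist_le (.cons a14 .nil)) (by decide)
  · exact le_trans (SimpleGraph.dist_le (.cons a01.symm (.cons a02 (.cons a25 .nil)))) (by decide)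
  · exact le_trans (SimpleGraph.dist_le (.cons a01.symm (.cons a03 (.cons a36 .nil)))) (by decide)
  · exact le_trans (SimpleGraph.dist_le (.cons a02.symm .nil)) (by decide)
  · exact le_trans (SimpleGraph.dist_le (.cons a02.symm (.cons a01 .nil))) (by decide)
  · exact le_trans (SimpleGraph.dist_le .nil) (by decide)
  · exact le_trans (SimpleGraph.dist_le (.cons a02.symm (.cons a03 .nil))) (by decide)
  · exact le_trans (SimpleGraph.dist_le (.cons a02.symm (.cons a01 (.cons a14 .nil)))) (by decide)
  · exact le_trans (SimpleGraph.dist_le (.cons a25 .nil)) (by decide)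
  · exact le_trans (SimpleGraph.dist_le (.cons a02.symm (.cons a03 (.cons a36 .nil)))) (by decide)
  · exact le_trans (SimpleGraph.dist_le (.cons a03.symm .nil)) (by decide)
  · exact le_trans (SimpleGraph.dist_le (.cons a03.symm (.cons a01 .nil))) (by decide)
  · exact le_trans (SimpleGraph.dist_le (.cons a03.symm (.cons a02 .nil))) (by decide)
  · exact le_trans (SimpleGraph.dist_le .nil) (by decide)
  · exact le_trans (SimpleGraph.dist_le (.cons a03.symm (.cons a01 (.cons a14 .nil)))) (by decide)
  · exact le_trans (SimpleGraph.dist_le (.cons a03.symm (.cons a02 (.cons a25 .nil)))) (by decide)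
  · exact le_trans (SimpleGraph.dist_le (.cons a36 .nil)) (by decide)
  · exact le_trans (SimpleGraph.dist_le (.cons a14.symm (.cons a01.symm .nil))) (by decide)
  · exact le_trans (SimpleGraph.dist_le (.cons a14.symm .nil)) (by decide)
  · exact le_trans (SimpleGraph.dist_le (.cons a14.symm (.cons a01.symm (.cons a02 .nil)))) (by decide)
  · exact le_trans (SimpleGraph.dist_le (.cons a14.symm (.cons a01.symm (.cons a03 .nil)))) (by decide)
  · exact le_trans (SimpleGraph.dist_le .nil) (by decide)
  · exact le_trans (SimpleGraph.dist_le (.cons a14.symm (.cons a01.symm (.cons a02 (.cons a25 .nil))))) (by decide)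
  · exact le_trans (SimpleGraph.dist_le (.cons a14.symm (.cons a01.symm (.cons a03 (.cons a36 .nil))))) (by decide)
  · exact le_trans (SimpleGraph.dist_le (.cons a25.symm (.cons a02.symm .nil))) (by decide)
  · exact le_trans (SimpleGraph.dist_le (.cons a25.symm (.cons a02.symm (.cons a01 .nil)))) (by decide)
  · exact le_trans (SimpleGraph.dist_le (.cons a25.symm .nil)) (by decide)
  · exact le_trans (SimpleGraph.dist_le (.cons a25.symm (.cons a02.symm (.cons a03 .nil)))) (by decide)
  · exact le_trans (SimpleGraph.dist_le (.cons a25.symm (.cons a02.symm (.cons a01 (.cons a14 .nil))))) (by decide)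
  · exact le_trans (SimpleGraph.dist_le .nil) (by decide)
  · exact le_trans (SimpleGraph.dist_le (.cons a25.symm (.cons a02.symm (.cons a03 (.cons a36 .nil))))) (by decide)
  · exact le_trans (SimpleGraph.dist_le (.cons a36.symm (.cons a03.symm .nil))) (by decide)
  · exact le_trans (SimpleGraph.dist_le (.cons a36.symm (.cons a03.symm (.cons a01 .nil)))) (by decide)
  · exact le_trans (SimpleGraph.dist_le (.cons a36.symm (.cons a03.symm (.cons a02 .nil)))) (by decide)
  · exact le_trans (SimpleGraph.dist_le (.cons a36.symm .nil)) (by decide)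
  · exact le_trans (SimpleGraph.dist_le (.cons a36.symm (.cons a03.symm (.cons a01 (.cons a14 .nil))))) (by decide)
  · exact le_trans (SimpleGraph.dist_le (.cons a36.symm (.cons a03.symm (.cons a02 (.cons a25 .nil))))) (by decide)
  · exact le_trans (SimpleGraph.dist_le .nil) (by decide)

lemma lip : ∀ u a b : Fin 7, threeLegsTree.Adj a b → dmat u b ≤ dmat u a + 1 := by
  have key : ∀ u a b : Fin 7,
      ((a = 0 ∧ b = 1) ∨ (a = 0 ∧ b = 2) ∨ (a = 0 ∧ b = 3) ∨
        (a = 1 ∧ b = 4) ∨ (a = 2 ∧ b = 5) ∨ (a = 3 ∧ b = 6)) →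
      dmat u b ≤ dmat u a + 1 ∧ dmat u a ≤ dmat u b + 1 := by decide
  intro u a b hab
  unfold threeLegsTree at hab
  rw [SimpleGraph.fromRel_adj] at hab
  rcases hab.2 with h | h
  · exact (key u a b h).1
  · exact (key u b a h).2

lemma walk_bound (u : Fin 7) : ∀ {x y : Fin 7} (p : threeLegsTree.Walk x y),
    dmat u y ≤ dmat u x + p.length := by
  intro x y p
  induction p with
  | nil => simp
  | cons h p ih =>
    have := lip u _ _ h
    simp only [SimpleGraph.Walk.length_cons]
    omega

lemma reach : ∀ u v : Fin 7, threeLegsTree.Reachable u v := by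
  have h0 : ∀ v : Fin 7, threeLegsTree.Reachable 0 v := by
    intro v
    fin_cases v
    · exact .refl _
    · exact a01.reachable
    · exact a02.reachable
    · exact a03.reachable
    · exact (a01.reachable).trans a14.reachable
    · exact (a02.reachable).trans a25.reachable
    · exact (a03.reachable).trans a36.reachable
  intro u v
  exact (h0 u).symm.trans (h0 v)

lemma dist_eq (u v : Fin 7) : threeLegsTree.dist u v = dmat u v := by
  refine le_antisymm (dist_le_dmat u v) ?_
  obtain ⟨p, hp⟩ := (reach u v).exists_walk_length_eq_dist
  have h := walk_bound u p
  have h0 : dmat u u = 0 := by fin_cases u <;> rfl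
  omega

/-! ### Balls -/

lemma mem_tBall {v w : Fin 7} {r : ℝ} : w ∈ tBall v r ↔ (dmat v w : ℝ) ≤ r := by
  simp [tBall, dist_eq]

def Bset (v : Fin 7) (n : ℕ) : Finset (Fin 7) :=
  Finset.univ.filter (fun w => dmat v w ≤ n)

lemma tBall_subset {v : Fin 7} {r : ℝ} {n : ℕ} (hr : r < n + 1) :
    tBall v r ⊆ Bset v n := by
  intro w hw
  rw [mem_tBall] at hw
  simp only [Bset, Finset.mem_filter, Finset.mem_univ, true_and]
  have : (dmat v w : ℝ) < n + 1 := lt_of_le_of_lt hw hr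
  exact_mod_cast Nat.lt_succ_iff.mp (by exact_mod_cast this)

lemma subset_tBall {v : Fin 7} {r : ℝ} {n : ℕ} (hr : (n : ℝ) ≤ r) :
    Bset v n ⊆ tBall v r := by
  intro w hw
  simp only [Bset, Finset.mem_filter, Finset.mem_univ, true_and] at hw
  rw [mem_tBall]
  exact le_trans (by exact_mod_cast hw) hr

lemma dmat_le_four : ∀ v w : Fin 7, dmat v w ≤ 4 := by decide

lemma tBall_subset_B4 {v : Fin 7} {r : ℝ} : tBall v r ⊆ Bset v 4 := by
  intro w _
  simp only [Bset, Finset.mem_filter, Finset.mem_univ, true_and]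
  exact dmat_le_four v w

lemma mem_tBall_self {v : Fin 7} {r : ℝ} (hr : 0 ≤ r) : v ∈ tBall v r := by
  rw [mem_tBall]
  have h0 : dmat v v = 0 := by fin_cases v <;> rfl
  rw [h0]; exact_mod_cast hr

/-! ### The root of the cubic -/

lemma exists_root : ∃ x : ℝ, x ∈ Set.Icc (2.08:ℝ) 2.09 ∧ x^3 + x^2 - 5*x - 3 = 0 := by
  have hc : ContinuousOn (fun x : ℝ => x^3 + x^2 - 5*x - 3) (Set.Icc 2.08 2.09) := by
    fun_prop
  have h := intermediate_value_Icc (by norm_num : (2.08:ℝ) ≤ 2.09) hc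
  have h0 : (0:ℝ) ∈ Set.Icc ((2.08:ℝ)^3 + 2.08^2 - 5*2.08 - 3)
      ((2.09:ℝ)^3 + 2.09^2 - 5*2.09 - 3) := by
    constructor <;> norm_num
  obtain ⟨x, hx, hfx⟩ := h h0
  exact ⟨x, hx, hfx⟩

noncomputable def x0 : ℝ := exists_root.choose
lemma x0_ge : 2.08 ≤ x0 := exists_root.choose_spec.1.1
lemma x0_le : x0 ≤ 2.09 := exists_root.choose_spec.1.2
lemma x0_root : x0^3 + x0^2 - 5*x0 - 3 = 0 := exists_root.choose_spec.2

/-! ### The optimal measure and the upper bound -/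

noncomputable def mu : Fin 7 → ℝ := fun v =>
  if v = 0 then 1 else if v = 1 ∨ v = 2 ∨ v = 3 then x0/3 else (x0^2-3)/3

lemma mu_pos : ∀ v, 0 < mu v := by
  have h1 := x0_ge
  intro v
  fin_cases v <;> simp (config := { decide := true }) only [mu] <;> norm_num <;> nlinarith

lemma key_step {μ : Fin 7 → ℝ} (hμ : ∀ v, 0 ≤ μ v) {C : ℝ} (hC : 0 ≤ C) {v : Fin 7} {r : ℝ}
    {S T : Finset (Fin 7)} (hS : tBall v (2*r) ⊆ S) (hT : T ⊆ tBall v r)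
    (h : ∑ w ∈ S, μ w ≤ C * ∑ w ∈ T, μ w) :
    ∑ w ∈ tBall v (2*r), μ w ≤ C * ∑ w ∈ tBall v r, μ w :=
  le_trans (Finset.sum_le_sum_of_subset_of_nonneg hS fun i _ _ => hμ i)
    (h.trans (mul_le_mul_of_nonneg_left
      (Finset.sum_le_sum_of_subset_of_nonneg hT fun i _ _ => hμ i) hC))

lemma upper_main (v : Fin 7) (r : ℝ) (hr : 0 ≤ r) :
    ∑ w ∈ tBall v (2*r), mu w ≤ (x0+1) * ∑ w ∈ tBall v r, mu w := by
  have hx1 := x0_ge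
  have hroot := x0_root
  have hC : (0:ℝ) ≤ x0 + 1 := by linarith
  have hmu : ∀ w, 0 ≤ mu w := fun w => (mu_pos w).le
  rcases lt_or_ge r 1 with h1 | h1
  · refine key_step hmu hC (tBall_subset (n := 1) (by push_cast; linarith))
      (subset_tBall (n := 0) (by push_cast; linarith)) ?_
    fin_cases v <;>
      simp only [Bset, Finset.sum_filter, Fin.sum_univ_seven] <;>
      simp (config := { decide := true }) only [mu] <;>
      norm_num <;> nlinarith [hroot, hx1]
  · rcases lt_or_ge r 2 with h2 | h2
    · refine key_step hmu hC (tBall_subset (n := 3) (by push_cast; linarith))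
        (subset_tBall (n := 1) (by push_cast; linarith)) ?_
      fin_cases v <;>
        simp only [Bset, Finset.sum_filter, Fin.sum_univ_seven] <;>
        simp (config := { decide := true }) only [mu] <;>
        norm_num <;> nlinarith [hroot, hx1]
    · refine key_step hmu hC tBall_subset_B4
        (subset_tBall (n := 2) (by push_cast; linarith)) ?_
      fin_cases v <;>
        simp only [Bset, Finset.sum_filter, Fin.sum_univ_seven] <;>
        simp (config := { decide := true }) only [mu] <;>
        norm_num <;> nlinarith [hroot, hx1]

instance : Nonempty {r : ℝ // 0 ≤ r} := ⟨⟨0, le_refl 0⟩⟩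
instance : Nonempty {f : Fin 7 → ℝ // ∀ v, 0 < f v} := ⟨⟨fun _ => 1, fun _ => one_pos⟩⟩

lemma den_pos {μ : Fin 7 → ℝ} (hμ : ∀ v, 0 < μ v) {v : Fin 7} {r : ℝ} (hr : 0 ≤ r) :
    0 < ∑ w ∈ tBall v r, μ w :=
  Finset.sum_pos' (fun i _ => (hμ i).le) ⟨v, mem_tBall_self hr, hμ v⟩

lemma CT_le : CT ≤ x0 + 1 := by
  refine le_trans (ciInf_le ⟨0, ?_⟩ ⟨mu, mu_pos⟩) ?_
  · rintro y ⟨ν, rfl⟩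
    refine Real.iSup_nonneg fun v => Real.iSup_nonneg fun r => div_nonneg ?_ ?_ <;>
      exact Finset.sum_nonneg fun i _ => (ν.2 i).le
  · refine ciSup_le fun v => ciSup_le fun r => ?_
    rw [div_le_iff₀ (den_pos mu_pos r.2)]
    exact upper_main v r r.2

/-! ### The lower bound -/

lemma CT_ge : x0 + 1 ≤ CT := by
  refine le_ciInf ?_
  rintro ⟨μ, hμ⟩
  simp only
  have hμ' : ∀ w, 0 ≤ μ w := fun w => (hμ w).le
  set f : Fin 7 → {r : ℝ // 0 ≤ r} → ℝ := fun v r =>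
    (∑ w ∈ tBall v (2 * (r : ℝ)), μ w) / (∑ w ∈ tBall v (r : ℝ), μ w) with hf
  have hbdd : ∀ v, BddAbove (Set.range (f v)) := by
    intro v
    refine ⟨(∑ w, μ w) / μ v, ?_⟩
    rintro y ⟨r, rfl⟩
    refine div_le_div₀ (Finset.sum_nonneg fun i _ => hμ' i)
      (Finset.sum_le_sum_of_subset_of_nonneg (Finset.subset_univ _) fun i _ _ => hμ' i)
      (hμ v) ?_
    exact Finset.single_le_sum (fun i _ => hμ' i) (mem_tBall_self r.2)
  have hex : ∃ v r, x0 + 1 ≤ f v r := by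
    by_contra hcon
    push_neg at hcon
    have hx1 := x0_ge
    have hroot := x0_root
    -- extract the seven key inequalities
    have conv : ∀ (v : Fin 7) (r : {r : ℝ // 0 ≤ r}) (n m : ℕ),
        ((m : ℝ) ≤ 2 * (r : ℝ)) → ((n : ℝ) ≤ (r : ℝ)) → ((r : ℝ) < n + 1) →
        ∑ w ∈ Bset v m, μ w < (x0 + 1) * ∑ w ∈ Bset v n, μ w := by
      intro v r n m hm hn hn'
      have h1 : ∑ w ∈ Bset v m, μ w ≤ ∑ w ∈ tBall v (2 * (r : ℝ)), μ w :=
        Finset.sum_le_sum_of_subset_of_nonneg (subset_tBall hm) fun i _ _ => hμ' i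
      have h2 : tBall v (r : ℝ) = Bset v n :=
        le_antisymm (tBall_subset hn') (subset_tBall hn)
      have h3 := hcon v r
      rw [hf, div_lt_iff₀ (den_pos hμ r.2)] at h3
      · rw [h2] at h3
        exact lt_of_le_of_lt h1 h3
    have H0 := conv 0 ⟨1/2, by norm_num⟩ 0 1 (by norm_num) (by norm_num) (by norm_num)
    have H1 := conv 1 ⟨1/2, by norm_num⟩ 0 1 (by norm_num) (by norm_num) (by norm_num)
    have H2 := conv 2 ⟨1/2, by norm_num⟩ 0 1 (by norm_num) (by norm_num) (by norm_num)
    have H3 := conv 3 ⟨1/2, by norm_num⟩ 0 1 (by norm_num) (by norm_num) (by norm_num)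
    have L1 := conv 4 ⟨3/2, by norm_num⟩ 1 3 (by norm_num) (by norm_num) (by norm_num)
    have L2 := conv 5 ⟨3/2, by norm_num⟩ 1 3 (by norm_num) (by norm_num) (by norm_num)
    have L3 := conv 6 ⟨3/2, by norm_num⟩ 1 3 (by norm_num) (by norm_num) (by norm_num)
    simp (config := { decide := true }) only [Bset, Finset.sum_filter, Fin.sum_univ_seven]
      at H0 H1 H2 H3 L1 L2 L3
    norm_num at H0 H1 H2 H3 L1 L2 L3
    -- now pure arithmetic
    set c := μ 0
    set b1 := μ 1; set b2 := μ 2; set b3 := μ 3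
    set a1 := μ 4; set a2 := μ 5; set a3 := μ 6
    have hc : 0 < c := hμ 0
    have hxpos : (0:ℝ) < x0 := by linarith
    have e1 : a1 + a2 + a3 + 3*c < x0*(b1+b2+b3) := by nlinarith [H1, H2, H3]
    have e2 : 3*c + 3*(b1+b2+b3) <
        x0*(a1+a2+a3) + x0*(b1+b2+b3) + (b1+b2+b3) := by nlinarith [L1, L2, L3]
    have e3 := mul_lt_mul_of_pos_left e1 hxpos
    have e4 : 3*c*(1+x0) < (b1+b2+b3)*(x0^2+x0-2) := by nlinarith [e2, e3]
    have hq : (0:ℝ) < x0^2 + x0 - 2 := by nlinarith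
    have hB : b1+b2+b3 < x0*c := by nlinarith [H0]
    have e5 : (b1+b2+b3)*(x0^2+x0-2) < (x0*c)*(x0^2+x0-2) :=
      mul_lt_mul_of_pos_right hB hq
    have e6 : (x0*c)*(x0^2+x0-2) = 3*c*(1+x0) := by linear_combination c * hroot
    linarith
  obtain ⟨v, r, hvr⟩ := hex
  calc x0 + 1 ≤ f v r := hvr
    _ ≤ ⨆ r, f v r := le_ciSup (hbdd v) r
    _ ≤ ⨆ v, ⨆ r, f v r :=
        le_ciSup (f := fun v => ⨆ r, f v r)
          (Set.Finite.bddAbove (Set.finite_range _)) v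

lemma CT_eq : CT = x0 + 1 := le_antisymm CT_le CT_ge

end Spider

/-- `C_T − 1` is the largest real root of `x³ + x² − 5x − 3`;
in particular `3 < C_T < 3.1`. -/
theorem stmt_15 :
    ((CT - 1) ^ 3 + (CT - 1) ^ 2 - 5 * (CT - 1) - 3 = 0 ∧
      ∀ x : ℝ, x ^ 3 + x ^ 2 - 5 * x - 3 = 0 → x ≤ CT - 1) ∧
    3 < CT ∧ CT < 3.1 := by
  have hCT : CT - 1 = Spider.x0 := by rw [Spider.CT_eq]; ring
  have hge := Spider.x0_ge
  have hle := Spider.x0_le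
  have hroot := Spider.x0_root
  refine ⟨⟨by rw [hCT]; linarith [hroot], ?_⟩, ?_, ?_⟩
  · intro x hx
    rw [hCT]
    by_contra hgt
    push_neg at hgt
    have h1 : (0:ℝ) < x - Spider.x0 := by linarith
    have h2 : (0:ℝ) < x^2 + x*Spider.x0 + Spider.x0^2 + x + Spider.x0 - 5 := by nlinarith
    have h3 : (x - Spider.x0) * (x^2 + x*Spider.x0 + Spider.x0^2 + x + Spider.x0 - 5) = 0 := by
      linear_combination hx - hroot
    nlinarith [mul_pos h1 h2]
  · rw [Spider.CT_eq]; linarith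
  · rw [Spider.CT_eq]; linarith
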